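/- Let R = ℚ[α] and let M ⊂ R³ be the R-module of triples (f_x, f_y, f_z) with f_x ≡ f_y ≡ f_z mod α and f_x − 2f_y + f_z ≡ 0 mod α². Then M/(α·M) (quotient by the submodule α·M, where α acts diagonally) is a 3-dimensional ℚ-vector space. -/

import Mathlib

/-!
`M` is a free `ℚ[α]`-module with basis `(1, 1, 1)`, `(α, 0, -α)`, `(α², 0, 0)`: subtracting
`f_y · (1, 1, 1)` leaves `(f_x - f_y, 0, f_z - f_y)`, and the two congruences say exactly that this
is a `ℚ[α]`-combination of the other two vectors. Hence `M/αM ≅ (ℚ[α]/α) ⊗ M ≅ (ℚ[α]/α)³ = ℚ³`.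
-/

open Polynomial

noncomputable section

namespace Stmt19

/-- The module of congruence triples over `R = ℚ[α]` (here `α = X`):
`f_x ≡ f_y ≡ f_z mod α` and `f_x − 2 f_y + f_z ≡ 0 mod α²`. -/
def M : Submodule ℚ[X] (ℚ[X] × ℚ[X] × ℚ[X]) where
  carrier := {f | X ∣ f.1 - f.2.1 ∧ X ∣ f.2.1 - f.2.2 ∧
    X ^ 2 ∣ f.1 - 2 * f.2.1 + f.2.2}
  zero_mem' := by simp
  add_mem' := by
    rintro a b ⟨h1, h2, h3⟩ ⟨g1, g2, g3⟩
    refine ⟨?_, ?_, ?_⟩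
    · have := dvd_add h1 g1
      convert this using 1
      simp only [Prod.fst_add, Prod.snd_add]; ring
    · have := dvd_add h2 g2
      convert this using 1
      simp only [Prod.fst_add, Prod.snd_add]; ring
    · have := dvd_add h3 g3
      convert this using 1
      simp only [Prod.fst_add, Prod.snd_add]; ring
  smul_mem' := by
    rintro c a ⟨h1, h2, h3⟩
    refine ⟨?_, ?_, ?_⟩
    · have := h1.mul_left c
      convert this using 1
      simp only [Prod.smul_fst, Prod.smul_snd, smul_eq_mul]; ring
    · have := h2.mul_left c
      convert this using 1
      simp only [Prod.smul_fst, Prod.smul_snd, smul_eq_mul]; ring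
    · have := h3.mul_left c
      convert this using 1
      simp only [Prod.smul_fst, Prod.smul_snd, smul_eq_mul]; ring

/-- The submodule `α·M` of `M`. -/
def N : Submodule ℚ[X] M := (Ideal.span {(X : ℚ[X])}) • (⊤ : Submodule ℚ[X] M)

/-- The quotient `M/(α·M)`. -/
abbrev Q := M ⧸ N

instance : Module ℚ Q := Module.compHom Q (algebraMap ℚ ℚ[X])

end Stmt19

open Module

theorem Polynomial.finrank_quotient_span_X {K : Type*} [Field K] :
    finrank K (K[X] ⧸ Ideal.span {(X : K[X])}) = 1 := by
  rw [show (X : K[X]) = X - C 0 by simp, (quotientSpanXSubCAlgEquiv 0).toLinearEquiv.finrank_eq,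
    finrank_self]

theorem Submodule.finrank_quotient_of_eq_smul_top {K R M : Type*} [Field K] [CommRing R]
    [Algebra K R] [AddCommGroup M] [Module R M] [Module.Free R M] [Module.Finite R M]
    {I : Ideal R} [Nontrivial (R ⧸ I)] {N : Submodule R M} (hN : N = I • ⊤) [Module K (M ⧸ N)]
    [IsScalarTower K R (M ⧸ N)] :
    finrank K (M ⧸ N) = finrank K (R ⧸ I) * finrank R M := by
  subst hN
  have : Nontrivial R := (Ideal.Quotient.mk I).domain_nontrivial
  rw [← ((TensorProduct.quotTensorEquivQuotSMul M I).restrictScalars K).finrank_eq,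
    ← finrank_mul_finrank K (R ⧸ I), finrank_baseChange]

namespace Stmt19

lemma mem_M {f : ℚ[X] × ℚ[X] × ℚ[X]} :
    f ∈ M ↔ X ∣ f.1 - f.2.1 ∧ X ∣ f.2.1 - f.2.2 ∧ X ^ 2 ∣ f.1 - 2 * f.2.1 + f.2.2 :=
  Iff.rfl

def basisVec : Fin 3 → M :=
  ![⟨(1, 1, 1), by norm_num [mem_M]⟩, ⟨(X, 0, -X), by simp [mem_M]⟩,
    ⟨(X ^ 2, 0, 0), by simp [mem_M]⟩]

lemma coe_sum_smul_basisVec (c : Fin 3 → ℚ[X]) :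
    ((∑ i, c i • basisVec i : M) : ℚ[X] × ℚ[X] × ℚ[X]) =
      (c 0 + c 1 * X + c 2 * X ^ 2, c 0, c 0 - c 1 * X) := by
  simp only [basisVec, Fin.sum_univ_three, Fin.isValue, Matrix.cons_val_zero, Matrix.cons_val_one,
    Matrix.cons_val, SetLike.mk_smul_mk, Prod.smul_mk, smul_eq_mul, mul_one, mul_zero, mul_neg,
    AddMemClass.mk_add_mk, Prod.mk_add_mk, add_zero, Prod.mk.injEq, true_and]
  ring

lemma linearIndependent_basisVec : LinearIndependent ℚ[X] basisVec := by
  refine Fintype.linearIndependent_iff.2 fun c hc => ?_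
  have hc' := congrArg Subtype.val hc
  rw [coe_sum_smul_basisVec, Submodule.coe_zero, Prod.mk_eq_zero, Prod.mk_eq_zero] at hc'
  obtain ⟨h₁, h₀, h₂⟩ := hc'
  rw [h₀, zero_sub, neg_eq_zero, mul_eq_zero, or_iff_left X_ne_zero] at h₂
  rw [h₀, h₂, zero_mul, zero_add, zero_add, mul_eq_zero,
    or_iff_left (pow_ne_zero 2 X_ne_zero)] at h₁
  intro i
  fin_cases i <;> assumption

lemma span_basisVec : Submodule.span ℚ[X] (Set.range basisVec) = ⊤ := by
  refine eq_top_iff.2 fun m _ => (Submodule.mem_span_range_iff_exists_fun ℚ[X]).2 ?_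
  obtain ⟨⟨f, g, h⟩, -, ⟨u, hu⟩, ⟨w, hw⟩⟩ := m
  refine ⟨![g, u, w], Subtype.ext ?_⟩
  rw [coe_sum_smul_basisVec]
  dsimp only at hu hw
  refine Prod.ext ?_ (Prod.ext rfl ?_)
  · simp only [Matrix.cons_val_zero, Matrix.cons_val_one, Matrix.cons_val_two, Matrix.head_cons,
      Matrix.tail_cons]
    linear_combination -hu - hw
  · simp only [Matrix.cons_val_zero, Matrix.cons_val_one]
    linear_combination hu

def basisM : Basis (Fin 3) ℚ[X] M :=
  .mk linearIndependent_basisVec span_basisVec.ge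

lemma finrank_M : finrank ℚ[X] M = 3 := by
  simp [finrank_eq_card_basis basisM]

/-- The quotient `M/(α·M)` of the congruence-triple module `M ⊂ ℚ[α]³` is a
3-dimensional `ℚ`-vector space. -/
theorem quotient_is_three_dimensional : Module.finrank ℚ Q = 3 := by
  -- `Q` also inherits a `ℚ`-action from `M`; the statement uses the one through `ℚ[X]`.
  have := IsScalarTower.of_compHom ℚ ℚ[X] Q
  have : Nontrivial (ℚ[X] ⧸ Ideal.span {(X : ℚ[X])}) :=
    nontrivial_of_finrank_pos (R := ℚ) (by rw [finrank_quotient_span_X]; exact one_pos)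
  rw [Submodule.finrank_quotient_of_eq_smul_top (N := N) rfl, finrank_quotient_span_X, finrank_M,
    one_mul]

end Stmt19
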